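/- The diagonal entries of the empirical Gram matrix satisfy E[ Σ_{i=1}^M ( ⟨μ̂_i, μ̂_i⟩_H − ⟨μ_i, μ_i⟩_H )² ] ≤ 4C²/n̄, where the expectation is over the M mutually independent datasets. -/

import Mathlib

/-!
For each dataset, `‖μ̂‖² - ‖μ‖² = ⟪μ̂ - μ, μ̂ + μ⟫`, and both `μ̂` (a convex combination of values
of `φ`) and `μ` (an average of `φ`) lie in the closed convex set `{v | ‖v‖² ≤ C}`, so
`(‖μ̂‖² - ‖μ‖²)² ≤ 4C ‖μ̂ - μ‖²`. The vectors `φ(ξⱼ) - μ` are i.i.d. and centred, so their cross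
terms integrate to zero and `E‖μ̂ - μ‖² = (E‖φ‖² - ‖μ‖²) / n ≤ C / n`. Each dataset thus
contributes at most `4C² / nᵢ`, and these add up to `4C² / n̄`.
-/

open MeasureTheory

/-- Empirical kernel mean embedding of the feature map `φ` based on `n` samples. -/
noncomputable def empEmb {Ξ H : Type*} [NormedAddCommGroup H] [InnerProductSpace ℝ H]
    (φ : Ξ → H) {n : ℕ} (x : Fin n → Ξ) : H := (n : ℝ)⁻¹ • ∑ j, φ (x j)

open scoped RealInnerProductSpace

lemma memLp_sum_comp_eval {Ξ E : Type*} [MeasurableSpace Ξ] [NormedAddCommGroup E]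
    {P : Measure Ξ} [IsProbabilityMeasure P] {p : ENNReal} {g : Ξ → E} (hg : MemLp g p P)
    (n : ℕ) : MemLp (fun x : Fin n → Ξ => ∑ j, g (x j)) p (Measure.pi fun _ => P) :=
  memLp_finsetSum Finset.univ fun j _ =>
    hg.comp_measurePreserving (measurePreserving_eval (fun _ : Fin n => P) j)

lemma memLp_two_of_norm_sq_le {α E : Type*} [MeasurableSpace α] [NormedAddCommGroup E]
    {P : Measure α} [IsFiniteMeasure P] {f : α → E} (hf : AEStronglyMeasurable f P) {C : ℝ}
    (hfC : ∀ a, ‖f a‖ ^ 2 ≤ C) : MemLp f 2 P :=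
  (memLp_two_iff_integrable_sq_norm hf).2 <| Integrable.of_bound (by fun_prop) C <|
    ae_of_all _ fun a => by rw [Real.norm_of_nonneg (sq_nonneg _)]; exact hfC a

lemma integral_sum_comp_eval {ι : Type*} [Fintype ι] {X : ι → Type*}
    [∀ i, MeasurableSpace (X i)] {P : ∀ i, Measure (X i)} [∀ i, IsProbabilityMeasure (P i)]
    {E : Type*} [NormedAddCommGroup E] [NormedSpace ℝ E] {f : ∀ i, X i → E}
    (hf : ∀ i, Integrable (f i) (P i)) :
    ∫ x, ∑ i, f i (x i) ∂Measure.pi P = ∑ i, ∫ y, f i y ∂P i := by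
  rw [integral_finsetSum _ fun i _ => integrable_comp_eval (hf i)]
  exact Finset.sum_congr rfl fun i _ => integral_comp_eval (hf i).1

section

variable {H : Type*} [NormedAddCommGroup H] [InnerProductSpace ℝ H]

lemma sq_norm_sq_sub_norm_sq_le {C : ℝ} {a b : H} (ha : ‖a‖ ^ 2 ≤ C) (hb : ‖b‖ ^ 2 ≤ C) :
    (‖a‖ ^ 2 - ‖b‖ ^ 2) ^ 2 ≤ 4 * C * ‖a - b‖ ^ 2 := by
  have hdiff : ‖a‖ ^ 2 - ‖b‖ ^ 2 = ⟪a - b, a + b⟫ := by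
    rw [inner_sub_left, inner_add_right, inner_add_right, real_inner_self_eq_norm_sq,
      real_inner_self_eq_norm_sq, real_inner_comm b a]
    ring
  have hsum : ‖a + b‖ ^ 2 ≤ 4 * C := by
    linarith [parallelogram_law_with_norm ℝ a b, sq_nonneg ‖a - b‖]
  calc (‖a‖ ^ 2 - ‖b‖ ^ 2) ^ 2 = |⟪a - b, a + b⟫| ^ 2 := by rw [hdiff, sq_abs]
    _ ≤ (‖a - b‖ * ‖a + b‖) ^ 2 := by gcongr; exact abs_real_inner_le_norm _ _
    _ ≤ 4 * C * ‖a - b‖ ^ 2 := by rw [mul_pow, mul_comm]; gcongr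

lemma convex_setOf_norm_sq_le (C : ℝ) : Convex ℝ {v : H | ‖v‖ ^ 2 ≤ C} := by
  simpa using ((convexOn_norm convex_univ).pow (fun v _ => norm_nonneg v) 2).convex_le C

section Empirical

variable {Ξ : Type*} {φ : Ξ → H} {n : ℕ}

lemma norm_sq_empEmb_le {C : ℝ} (hφ : ∀ ξ, ‖φ ξ‖ ^ 2 ≤ C) (hn : n ≠ 0) (x : Fin n → Ξ) :
    ‖empEmb φ x‖ ^ 2 ≤ C := by
  rw [empEmb, Finset.smul_sum]
  refine (convex_setOf_norm_sq_le C).sum_mem (fun _ _ => by positivity) ?_ fun j _ => hφ (x j)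
  simp [hn]

lemma empEmb_sub (hn : n ≠ 0) (x : Fin n → Ξ) (c : H) :
    empEmb φ x - c = (n : ℝ)⁻¹ • ∑ j, (φ (x j) - c) := by
  rw [Finset.sum_sub_distrib, smul_sub, Finset.sum_const, Finset.card_univ, Fintype.card_fin,
    ← Nat.cast_smul_eq_nsmul ℝ, smul_smul, inv_mul_cancel₀ (Nat.cast_ne_zero.2 hn), one_smul,
    empEmb]

lemma memLp_empEmb [MeasurableSpace Ξ] {P : Measure Ξ} [IsProbabilityMeasure P] {p : ENNReal}
    (hφ : MemLp φ p P) (n : ℕ) :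
    MemLp (fun x : Fin n → Ξ => empEmb φ x) p (Measure.pi fun _ => P) :=
  (memLp_sum_comp_eval hφ n).const_smul _

lemma integrable_norm_empEmb_sub_sq [MeasurableSpace Ξ] {P : Measure Ξ} [IsProbabilityMeasure P]
    (hφ : MemLp φ 2 P) (n : ℕ) (c : H) :
    Integrable (fun x : Fin n → Ξ => ‖empEmb φ x - c‖ ^ 2) (Measure.pi fun _ => P) :=
  ((memLp_empEmb hφ n).sub (memLp_const c)).integrable_norm_pow two_ne_zero

end Empirical

section Moments

variable [CompleteSpace H] {α : Type*} [MeasurableSpace α] {P : Measure α}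
  [IsProbabilityMeasure P] {f : α → H}

lemma norm_sq_integral_le (hf : Integrable f P) {C : ℝ} (hfC : ∀ a, ‖f a‖ ^ 2 ≤ C) :
    ‖∫ a, f a ∂P‖ ^ 2 ≤ C :=
  (convex_setOf_norm_sq_le C).integral_mem (isClosed_le (by fun_prop) continuous_const)
    (ae_of_all _ hfC) hf

lemma integral_norm_sub_integral_sq (hf : MemLp f 2 P) :
    ∫ a, ‖f a - ∫ b, f b ∂P‖ ^ 2 ∂P = ∫ a, ‖f a‖ ^ 2 ∂P - ‖∫ a, f a ∂P‖ ^ 2 := by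
  set m := ∫ a, f a ∂P
  have hfi : Integrable f P := hf.integrable one_le_two
  have hf2 : Integrable (fun a => ‖f a‖ ^ 2) P := hf.integrable_norm_pow two_ne_zero
  have hcrossi : Integrable (fun a => 2 * ⟪f a, m⟫) P := (hfi.inner_const m).const_mul 2
  have hdiff : Integrable (fun a => ‖f a‖ ^ 2 - 2 * ⟪f a, m⟫) P := hf2.sub hcrossi
  have hcross : ∫ a, ⟪f a, m⟫ ∂P = ‖m‖ ^ 2 := by
    simp_rw [real_inner_comm m]
    rw [integral_inner hfi, real_inner_self_eq_norm_sq]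
  simp_rw [norm_sub_sq_real]
  rw [integral_add hdiff (integrable_const _), integral_sub hf2 hcrossi, integral_const_mul,
    hcross]
  simp only [integral_const, probReal_univ, one_smul]
  ring

end Moments

section Product

variable {α β : Type*} [MeasurableSpace α] [MeasurableSpace β] {P : Measure α} {Q : Measure β}
  {f : α → H} {g : β → H}

lemma MeasureTheory.Integrable.inner_prod (hf : Integrable f P) (hg : Integrable g Q) :
    Integrable (fun p : α × β => ⟪f p.1, g p.2⟫) (P.prod Q) :=
  (hf.norm.mul_prod hg.norm).mono' (hf.1.comp_fst.inner hg.1.comp_snd)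
    (ae_of_all _ fun _ => norm_inner_le_norm _ _)

variable [CompleteSpace H]

lemma integral_inner_prod [SFinite P] [SFinite Q] (hf : Integrable f P) (hg : Integrable g Q) :
    ∫ p, ⟪f p.1, g p.2⟫ ∂(P.prod Q) = ⟪∫ a, f a ∂P, ∫ b, g b ∂Q⟫ := by
  rw [integral_prod _ (hf.inner_prod hg)]
  simp_rw [integral_inner hg, real_inner_comm (∫ b, g b ∂Q)]
  rw [integral_inner hf, real_inner_comm]

lemma integral_norm_add_sq_prod [IsProbabilityMeasure P] [IsProbabilityMeasure Q]
    (hf : MemLp f 2 P) (hg : MemLp g 2 Q) (hf0 : ∫ a, f a ∂P = 0) :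
    ∫ p, ‖f p.1 + g p.2‖ ^ 2 ∂(P.prod Q) = ∫ a, ‖f a‖ ^ 2 ∂P + ∫ b, ‖g b‖ ^ 2 ∂Q := by
  have hfi := hf.integrable one_le_two
  have hgi := hg.integrable one_le_two
  have hf2 := (hf.integrable_norm_pow two_ne_zero).comp_fst Q
  have hg2 := (hg.integrable_norm_pow two_ne_zero).comp_snd P
  have hcrossi := (hfi.inner_prod hgi).const_mul 2
  have hsum : Integrable (fun p : α × β => ‖f p.1‖ ^ 2 + 2 * ⟪f p.1, g p.2⟫) (P.prod Q) :=
    hf2.add hcrossi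
  have hfst : ∫ p, ‖f p.1‖ ^ 2 ∂(P.prod Q) = ∫ a, ‖f a‖ ^ 2 ∂P := by
    simpa using integral_fun_fst (ν := Q) fun a => ‖f a‖ ^ 2
  have hsnd : ∫ p, ‖g p.2‖ ^ 2 ∂(P.prod Q) = ∫ b, ‖g b‖ ^ 2 ∂Q := by
    simpa using integral_fun_snd (μ := P) fun b => ‖g b‖ ^ 2
  simp_rw [norm_add_sq_real]
  rw [integral_add hsum hg2, integral_add hf2 hcrossi, integral_const_mul,
    integral_inner_prod hfi hgi, hf0, inner_zero_left, hfst, hsnd, mul_zero, add_zero]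

end Product

section Sample

variable [CompleteSpace H] {Ξ : Type*} [MeasurableSpace Ξ] {P : Measure Ξ}
  [IsProbabilityMeasure P] {φ : Ξ → H} {C : ℝ} {n : ℕ}

lemma integral_norm_sum_sq_pi {g : Ξ → H} (hg : MemLp g 2 P) (hg0 : ∫ ξ, g ξ ∂P = 0) (n : ℕ) :
    ∫ x : Fin n → Ξ, ‖∑ j, g (x j)‖ ^ 2 ∂(Measure.pi fun _ => P) = n * ∫ ξ, ‖g ξ‖ ^ 2 ∂P := by
  induction n with
  | zero => simp
  | succ n ih =>
    have hsplit := measurePreserving_piFinSuccAbove (fun _ : Fin (n + 1) => P) 0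
    calc ∫ x : Fin (n + 1) → Ξ, ‖∑ j, g (x j)‖ ^ 2 ∂(Measure.pi fun _ => P)
        = ∫ p : Ξ × (Fin n → Ξ), ‖g p.1 + ∑ j, g (p.2 j)‖ ^ 2
            ∂(P.prod (Measure.pi fun _ => P)) := by
          rw [← hsplit.integral_comp']
          simp [Fin.sum_univ_succ, MeasurableEquiv.piFinSuccAbove_apply, Fin.tail]
      _ = (n + 1 : ℕ) * ∫ ξ, ‖g ξ‖ ^ 2 ∂P := by
          rw [integral_norm_add_sq_prod hg (memLp_sum_comp_eval hg n) hg0, ih]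
          push_cast
          ring

lemma integral_norm_empEmb_sub_sq (hφ : MemLp φ 2 P) (hn : n ≠ 0) :
    ∫ x : Fin n → Ξ, ‖empEmb φ x - ∫ ξ, φ ξ ∂P‖ ^ 2 ∂(Measure.pi fun _ => P)
      = (∫ ξ, ‖φ ξ‖ ^ 2 ∂P - ‖∫ ξ, φ ξ ∂P‖ ^ 2) / n := by
  have hcent_memLp : MemLp (fun ξ => φ ξ - ∫ ζ, φ ζ ∂P) 2 P := hφ.sub (memLp_const _)
  have hcent : ∫ ξ, (φ ξ - ∫ ζ, φ ζ ∂P) ∂P = 0 := by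
    rw [integral_sub (hφ.integrable one_le_two) (integrable_const _)]
    simp
  simp_rw [empEmb_sub hn, norm_smul, mul_pow]
  rw [integral_const_mul, integral_norm_sum_sq_pi hcent_memLp hcent n,
    integral_norm_sub_integral_sq hφ, norm_inv, RCLike.norm_natCast]
  field_simp

lemma sq_norm_sq_empEmb_sub_le (hφi : Integrable φ P) (hφ : ∀ ξ, ‖φ ξ‖ ^ 2 ≤ C) (hn : n ≠ 0)
    (x : Fin n → Ξ) :
    (‖empEmb φ x‖ ^ 2 - ‖∫ ξ, φ ξ ∂P‖ ^ 2) ^ 2 ≤ 4 * C * ‖empEmb φ x - ∫ ξ, φ ξ ∂P‖ ^ 2 :=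
  sq_norm_sq_sub_norm_sq_le (norm_sq_empEmb_le hφ hn x) (norm_sq_integral_le hφi hφ)

lemma integrable_sq_norm_sq_empEmb_sub (hφm : AEStronglyMeasurable φ P)
    (hφ : ∀ ξ, ‖φ ξ‖ ^ 2 ≤ C) (hn : n ≠ 0) :
    Integrable (fun x : Fin n → Ξ => (‖empEmb φ x‖ ^ 2 - ‖∫ ξ, φ ξ ∂P‖ ^ 2) ^ 2)
      (Measure.pi fun _ => P) := by
  have hφ2 := memLp_two_of_norm_sq_le hφm hφ
  have hemp := (memLp_empEmb hφ2 n).1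
  refine ((integrable_norm_empEmb_sub_sq hφ2 n (∫ ξ, φ ξ ∂P)).const_mul (4 * C)).mono'
    (by fun_prop) <| ae_of_all _ fun x => ?_
  rw [Real.norm_of_nonneg (sq_nonneg _)]
  exact sq_norm_sq_empEmb_sub_le (hφ2.integrable one_le_two) hφ hn x

lemma integral_sq_norm_sq_empEmb_sub_le (hφm : AEStronglyMeasurable φ P)
    (hφ : ∀ ξ, ‖φ ξ‖ ^ 2 ≤ C) (hn : n ≠ 0) :
    ∫ x : Fin n → Ξ, (‖empEmb φ x‖ ^ 2 - ‖∫ ξ, φ ξ ∂P‖ ^ 2) ^ 2 ∂(Measure.pi fun _ => P)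
      ≤ 4 * C ^ 2 / n := by
  have hφ2 := memLp_two_of_norm_sq_le hφm hφ
  have hC : 0 ≤ C := (sq_nonneg _).trans (hφ (nonempty_of_isProbabilityMeasure P).some)
  have hsecond : ∫ ξ, ‖φ ξ‖ ^ 2 ∂P ≤ C := by
    simpa using integral_mono (hφ2.integrable_norm_pow two_ne_zero) (integrable_const C) hφ
  calc ∫ x : Fin n → Ξ, (‖empEmb φ x‖ ^ 2 - ‖∫ ξ, φ ξ ∂P‖ ^ 2) ^ 2 ∂(Measure.pi fun _ => P)
      ≤ ∫ x : Fin n → Ξ, 4 * C * ‖empEmb φ x - ∫ ξ, φ ξ ∂P‖ ^ 2 ∂(Measure.pi fun _ => P) :=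
        integral_mono_of_nonneg (ae_of_all _ fun _ => sq_nonneg _)
          ((integrable_norm_empEmb_sub_sq hφ2 n (∫ ξ, φ ξ ∂P)).const_mul _)
          (ae_of_all _ (sq_norm_sq_empEmb_sub_le (hφ2.integrable one_le_two) hφ hn))
    _ = 4 * C * ((∫ ξ, ‖φ ξ‖ ^ 2 ∂P - ‖∫ ξ, φ ξ ∂P‖ ^ 2) / n) := by
        rw [integral_const_mul, integral_norm_empEmb_sub_sq hφ2 hn]
    _ ≤ 4 * C * (C / n) := by
        gcongr
        linarith [sq_nonneg ‖∫ ξ, φ ξ ∂P‖]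
    _ = 4 * C ^ 2 / n := by ring

end Sample

end

theorem empirical_gram_diagonal_second_moment_bound_general
    {H : Type*} [NormedAddCommGroup H] [InnerProductSpace ℝ H] [CompleteSpace H]
    {Ξ : Type*} [MeasurableSpace Ξ]
    (C : ℝ)
    (φ : Ξ → H) (hφm : StronglyMeasurable φ) (hφ : ∀ ξ, ‖φ ξ‖ ^ 2 ≤ C)
    (M : ℕ)
    (P : Fin M → Measure Ξ) [∀ i, IsProbabilityMeasure (P i)]
    (n : Fin M → ℕ) (hn : ∀ i, 0 < n i)
    (μ : Fin M → H) (hμ : ∀ i, μ i = ∫ ξ, φ ξ ∂(P i))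
    (nbar : ℝ) (hnbar : nbar = (∑ i, (1 : ℝ) / n i)⁻¹) :
    ∫ x : (i : Fin M) → Fin (n i) → Ξ,
        ∑ i, ((inner ℝ (empEmb φ (x i)) (empEmb φ (x i)) : ℝ) - (inner ℝ (μ i) (μ i) : ℝ)) ^ 2
        ∂(Measure.pi fun i => Measure.pi fun _ : Fin (n i) => P i) ≤
      4 * C ^ 2 / nbar := by
  obtain rfl : μ = fun i => ∫ ξ, φ ξ ∂(P i) := funext hμ
  simp_rw [real_inner_self_eq_norm_sq]
  rw [integral_sum_comp_eval fun i =>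
    integrable_sq_norm_sq_empEmb_sub hφm.aestronglyMeasurable hφ (hn i).ne']
  calc ∑ i, ∫ x, (‖empEmb φ x‖ ^ 2 - ‖∫ ξ, φ ξ ∂(P i)‖ ^ 2) ^ 2 ∂(Measure.pi fun _ => P i)
      ≤ ∑ i, 4 * C ^ 2 / n i := Finset.sum_le_sum fun i _ =>
        integral_sq_norm_sq_empEmb_sub_le hφm.aestronglyMeasurable hφ (hn i).ne'
    _ = 4 * C ^ 2 / nbar := by simp_rw [hnbar, div_inv_eq_mul, Finset.mul_sum, mul_one_div]

/-- **Second-moment bound for the diagonal of the empirical Gram matrix.**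
`E[Σ_i (⟨μ̂_i,μ̂_i⟩ − ⟨μ_i,μ_i⟩)²] ≤ 4C²/n̄`, the expectation being over the `M`
mutually independent datasets. -/
theorem empirical_gram_diagonal_second_moment_bound
    {H : Type*} [NormedAddCommGroup H] [InnerProductSpace ℝ H] [CompleteSpace H]
    {Ξ : Type*} [MeasurableSpace Ξ]
    (C : ℝ) (hC : 0 < C)
    (φ : Ξ → H) (hφm : StronglyMeasurable φ) (hφ : ∀ ξ, ‖φ ξ‖ ^ 2 ≤ C)
    (M : ℕ) (hM : 0 < M)
    (P : Fin M → Measure Ξ) [∀ i, IsProbabilityMeasure (P i)]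
    (n : Fin M → ℕ) (hn : ∀ i, 0 < n i)
    (μ : Fin M → H) (hμ : ∀ i, μ i = ∫ ξ, φ ξ ∂(P i))
    (nbar : ℝ) (hnbar : nbar = (∑ i, (1 : ℝ) / n i)⁻¹) :
    ∫ x : (i : Fin M) → Fin (n i) → Ξ,
        ∑ i, ((inner ℝ (empEmb φ (x i)) (empEmb φ (x i)) : ℝ) - (inner ℝ (μ i) (μ i) : ℝ)) ^ 2
        ∂(Measure.pi fun i => Measure.pi fun _ : Fin (n i) => P i) ≤
      4 * C ^ 2 / nbar :=
  empirical_gram_diagonal_second_moment_bound_general C φ hφm hφ M P n hn μ hμ nbar hnbar
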